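/- Suppose Φ is bijective. Then the map a ↦ σ(c₁ a) restricts to a bijection from ker ρ_A = {a ∈ A : ρ_A a = 0} onto {ξ ∈ W* : ξ∘ρ_B = 0 and ξ(c₀ v) = 0 for all (v,α) ∈ L}. (Isomorphism on top cohomology in the proof that the non-degeneracy conditions for 1-shifted coisotropic structures agree.) -/
import Mathlib


/-- A subspace `L ⊆ V × V*` is Lagrangian if it equals its orthogonal
complement with respect to the symmetric pairing
`⟨(v,α),(w,β)⟩ = α(w) + β(v)`. -/
def IsLagrangian {V : Type*} [AddCommGroup V] [Module ℝ V]
    (L : Submodule ℝ (V × Module.Dual ℝ V)) : Prop :=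
  ∀ x : V × Module.Dual ℝ V, x ∈ L ↔ ∀ y ∈ L, x.2 y.1 + y.2 x.1 = 0

/-- If `Φ : a ↦ ((ρ_A a, σ(c₁ a)∘c₀), c₁ a)` is bijective onto `X = L ×_c B`,
then `a ↦ σ(c₁ a)` restricts to a bijection from `ker ρ_A` onto
`{ξ ∈ W* : ξ∘ρ_B = 0 and ξ(c₀ v) = 0 for all (v,α) ∈ L}`. -/
theorem isomorphism_on_top_cohomology
    {A B V W : Type*}
    [AddCommGroup A] [Module ℝ A] [FiniteDimensional ℝ A]
    [AddCommGroup B] [Module ℝ B] [FiniteDimensional ℝ B]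
    [AddCommGroup V] [Module ℝ V] [FiniteDimensional ℝ V]
    [AddCommGroup W] [Module ℝ W] [FiniteDimensional ℝ W]
    (ρA : A →ₗ[ℝ] V) (ρB : B →ₗ[ℝ] W) (σ : B →ₗ[ℝ] Module.Dual ℝ W)
    (c₀ : V →ₗ[ℝ] W) (c₁ : A →ₗ[ℝ] B)
    (hC : c₀ ∘ₗ ρA = ρB ∘ₗ c₁)
    (hH1 : ∀ b b' : B, σ b (ρB b') + σ b' (ρB b) = 0)
    (hH2 : ∀ b : B, ρB b = 0 → σ b = 0 → b = 0)
    (hH3 : ∀ (w : W) (ξ : Module.Dual ℝ W), (∀ b : B, σ b w + ξ (ρB b) = 0) →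
      ∃ b : B, ρB b = w ∧ σ b = ξ)
    (L : Submodule ℝ (V × Module.Dual ℝ V)) (hL : IsLagrangian L)
    (hM : ∀ (a : A) (v : V) (α : Module.Dual ℝ V), (v, α) ∈ L →
      α (ρA a) + σ (c₁ a) (c₀ v) = 0)
    (hPhiSurj : ∀ (v : V) (α : Module.Dual ℝ V) (b : B),
      (v, α) ∈ L → c₀ v = ρB b → α = σ b ∘ₗ c₀ →
      ∃ a : A, ρA a = v ∧ σ (c₁ a) ∘ₗ c₀ = α ∧ c₁ a = b)
    (hPhiInj : ∀ a a' : A, ρA a = ρA a' →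
      σ (c₁ a) ∘ₗ c₀ = σ (c₁ a') ∘ₗ c₀ → c₁ a = c₁ a' → a = a') :
    -- the map lands in the target set
    (∀ a : A, ρA a = 0 →
      (σ (c₁ a) ∘ₗ ρB = 0 ∧
        ∀ (v : V) (α : Module.Dual ℝ V), (v, α) ∈ L → σ (c₁ a) (c₀ v) = 0)) ∧
    -- injectivity on ker ρ_A
    (∀ a a' : A, ρA a = 0 → ρA a' = 0 → σ (c₁ a) = σ (c₁ a') → a = a') ∧
    -- surjectivity onto the target set
    (∀ ξ : Module.Dual ℝ W, ξ ∘ₗ ρB = 0 →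
      (∀ (v : V) (α : Module.Dual ℝ V), (v, α) ∈ L → ξ (c₀ v) = 0) →
      ∃ a : A, ρA a = 0 ∧ σ (c₁ a) = ξ) := by
  have key : ∀ a : A, ρA a = 0 → ρB (c₁ a) = 0 := by
    intro a ha
    have := LinearMap.congr_fun hC a
    simp only [LinearMap.comp_apply, ha, map_zero] at this
    exact this.symm
  refine ⟨?_, ?_, ?_⟩
  · intro a ha
    constructor
    · ext b
      have h1 := hH1 (c₁ a) b
      rw [key a ha, map_zero] at h1
      simpa using h1
    · intro v α hvα
      have := hM a v α hvα
      rw [ha, map_zero] at this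
      linarith
  · intro a a' ha ha' hσ
    have hc : c₁ a = c₁ a' := by
      have hd : c₁ a - c₁ a' = 0 := by
        apply hH2
        · rw [map_sub, key a ha, key a' ha', sub_zero]
        · rw [map_sub, hσ, sub_self]
      exact sub_eq_zero.mp hd
    exact hPhiInj a a' (ha.trans ha'.symm) (by rw [hσ]) hc
  · intro ξ hξρ hξL
    obtain ⟨b, hb1, hb2⟩ := hH3 0 ξ (by
      intro b
      have := LinearMap.congr_fun hξρ b
      simp only [LinearMap.comp_apply, LinearMap.zero_apply] at this
      simp [this])
    have hmem : ((0 : V), σ b ∘ₗ c₀) ∈ L := by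
      rw [hL]
      intro y hy
      have := hξL y.1 y.2 (by simpa using hy)
      simp [hb2, this]
    obtain ⟨a, ha1, _, ha3⟩ := hPhiSurj 0 (σ b ∘ₗ c₀) b hmem (by simp [hb1]) rfl
    exact ⟨a, ha1, by rw [ha3, hb2]⟩
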